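/- arXiv:2210.04649 — 3 statements merged into one kernel-verified Lean document; each statement's English description precedes it below -/
import Mathlib

section
/- If a tree T contains an edge uv with d(u) = 1 and d(v) = 3, then χ'_irr(T) ≤ 2, i.e., T admits a locally irregular edge-coloring using at most 2 colors. -/
open Finset

section Counting
variable {V : Type*} [DecidableEq V]

private lemma sum_nval_le (C : Finset V) (a : V → ℕ) (W : Finset ℕ) :
    (∑ j ∈ W, (C.filter (fun y => a y = j)).card) ≤ C.card := by
  classical
  rw [← Finset.card_biUnion]
  · exact Finset.card_le_card (fun y hy => by
      simp only [Finset.mem_biUnion] at hy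
      obtain ⟨j, _, hj⟩ := hy
      exact (Finset.mem_filter.mp hj).1)
  · intro i _ j _ hij
    simp only [Finset.disjoint_left, Finset.mem_filter]
    rintro y ⟨_, h1⟩ ⟨_, h2⟩
    exact hij (h1 ▸ h2 ▸ rfl)

/-- key counting lemma: a good `m` always exists. -/
private lemma exists_good_m (C : Finset V) (a : V → ℕ) :
    ∃ m, 1 ≤ m ∧ m ≤ C.card + 1 ∧
      (C.filter (fun y => a y = m)).card + m ≤ C.card + 1 ∧
      (C.filter (fun y => a y = C.card + 1 - m)).card ≤ m - 1 ∧
      (m = C.card + 1 - m → (C.filter (fun y => a y = m)).card = 0) := by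
  classical
  by_contra hcon
  push_neg at hcon
  set K := C.card + 1 with hK
  set n : ℕ → ℕ := fun j => (C.filter (fun y => a y = j)).card with hn
  -- failure of each m in [1, K]
  have fail : ∀ m, 1 ≤ m → m ≤ K → ¬(n m + m ≤ K ∧ n (K - m) ≤ m - 1 ∧
      (m = K - m → n m = 0)) := by
    intro m h1 h2 ⟨c1, c2, c3⟩
    obtain ⟨he, hne⟩ := hcon m h1 h2 c1 c2
    exact hne (c3 he)
  have hCK : C.card + 1 = K := rfl
  have hnle : ∀ j, n j ≤ C.card := fun j => Finset.card_filter_le _ _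
  have hKpos : 1 ≤ K := by omega
  -- value K occurs
  have hnK : 1 ≤ n K := by
    have f := fail K hKpos le_rfl
    have h0 : n (K - K) ≤ K - 1 := by have := hnle (K - K); omega
    by_contra h
    exact f ⟨by omega, h0, fun hKK => by omega⟩
  by_cases hfull : ∃ x ∈ Finset.Icc 1 (K/2), 2*x ≠ K ∧ K - x ≤ n x ∧ x ≤ n (K - x)
  · obtain ⟨x, hx, hne2, h1, h2⟩ := hfull
    simp only [Finset.mem_Icc] at hx
    have hxne : x ≠ K - x := by omega
    have hsum : n x + n (K - x) ≤ C.card := by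
      have := sum_nval_le C a {x, K - x}
      rwa [Finset.sum_pair hxne] at this
    omega
  · push_neg at hfull
    set wfun : ℕ → ℕ := fun x => if 2*x = K then x else (if K + 1 - x ≤ n x then x else K - x)
      with hwfun
    have hwit : ∀ x ∈ Finset.Icc 1 (K/2),
        (if 2*x = K then 1 else 2) ≤ n (wfun x) ∧ x ≤ wfun x ∧ wfun x + x ≤ K ∧
        (wfun x = x ∨ wfun x = K - x) := by
      intro x hx
      simp only [Finset.mem_Icc] at hx
      by_cases hmid : 2*x = K
      · have hw : wfun x = x := by simp only [hwfun]; rw [if_pos hmid]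
        have hKx : K - x = x := by omega
        have f1 := fail x hx.1 (by omega)
        rw [hKx] at f1
        have hn1 : 1 ≤ n x := by
          by_contra h
          exact f1 ⟨by omega, by omega, fun _ => by omega⟩
        rw [hw, if_pos hmid]
        exact ⟨hn1, le_rfl, by omega, Or.inl rfl⟩
      · have hxlt : x < K - x := by omega
        have f1 := fail x hx.1 (by omega)
        have f2 := fail (K - x) (by omega) (by omega)
        have hKKx : K - (K - x) = x := by omega
        rw [hKKx] at f2
        have f1' : ¬(n x + x ≤ K ∧ n (K - x) ≤ x - 1) :=
          fun ⟨ha, hb⟩ => f1 ⟨ha, hb, fun h => by omega⟩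
        have f2' : ¬(n (K - x) + (K - x) ≤ K ∧ n x ≤ (K - x) - 1) :=
          fun ⟨ha, hb⟩ => f2 ⟨ha, hb, fun h => by omega⟩
        have f3 := hfull x (by simp only [Finset.mem_Icc]; omega) hmid
        rw [if_neg hmid]
        by_cases hbr : K + 1 - x ≤ n x
        · have hw : wfun x = x := by
            simp only [hwfun]; rw [if_neg hmid, if_pos hbr]
          rw [hw]
          exact ⟨by omega, le_rfl, by omega, Or.inl rfl⟩
        · have hw : wfun x = K - x := by
            simp only [hwfun]; rw [if_neg hmid, if_neg hbr]
          rw [hw]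
          exact ⟨by omega, by omega, by omega, Or.inr rfl⟩
    -- the image of wfun
    have hinj : Set.InjOn wfun ↑(Finset.Icc 1 (K/2)) := by
      intro x1 h1 x2 h2 heq
      obtain ⟨-, hb1, hc1, hd1⟩ := hwit x1 (by simpa using h1)
      obtain ⟨-, hb2, hc2, hd2⟩ := hwit x2 (by simpa using h2)
      simp only [Finset.coe_Icc, Set.mem_Icc] at h1 h2
      omega
    have hKnotmem : K ∉ (Finset.Icc 1 (K/2)).image wfun := by
      intro hmem
      obtain ⟨x, hx, hxw⟩ := Finset.mem_image.mp hmem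
      obtain ⟨-, hb, hc, -⟩ := hwit x hx
      simp only [Finset.mem_Icc] at hx
      omega
    have S1 : ∑ j ∈ insert K ((Finset.Icc 1 (K/2)).image wfun), n j ≤ C.card :=
      sum_nval_le C a _
    rw [Finset.sum_insert hKnotmem, Finset.sum_image (fun x hx y hy h => hinj hx hy h)] at S1
    have S4 : ∑ x ∈ Finset.Icc 1 (K/2), (if 2*x = K then 1 else 2) ≤
        ∑ x ∈ Finset.Icc 1 (K/2), n (wfun x) :=
      Finset.sum_le_sum (fun x hx => (hwit x hx).1)
    have S5 : K - 1 ≤ ∑ x ∈ Finset.Icc 1 (K/2), (if 2*x = K then 1 else 2) := by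
      set S := Finset.Icc 1 (K/2) with hS
      have hpt : ∀ x ∈ S, ((if 2*x = K then 1 else 2) + (if 2*x = K then 1 else 0)) = 2 := by
        intro x _
        split <;> rfl
      have hsum2 : (∑ x ∈ S, (if 2*x = K then 1 else 2)) +
          (∑ x ∈ S, (if 2*x = K then 1 else 0)) = 2 * S.card := by
        rw [← Finset.sum_add_distrib, Finset.sum_congr rfl hpt, Finset.sum_const, smul_eq_mul,
          mul_comm]
      have hone : (∑ x ∈ S, (if 2*x = K then 1 else 0)) ≤
          ∑ x ∈ S, (if x = K/2 then 1 else 0) := by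
        refine Finset.sum_le_sum (fun x _ => ?_)
        by_cases h2 : 2*x = K
        · rw [if_pos h2, if_pos (by omega)]
        · rw [if_neg h2]
          exact Nat.zero_le _
      have hone2 : (∑ x ∈ S, (if x = K/2 then 1 else 0)) ≤ 1 := by
        rw [Finset.sum_ite_eq' S (K/2) (fun _ => 1)]
        split <;> omega
      have hpar : (∑ x ∈ S, (if 2*x = K then 1 else 0)) = 0 ∨ 2*(K/2) = K := by
        by_cases hev : 2*(K/2) = K
        · exact Or.inr hev
        · refine Or.inl (Finset.sum_eq_zero (fun x _ => ?_))
          rw [if_neg (fun h => hev (by omega))]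
      have hcIcc : S.card = K/2 := by rw [hS, Nat.card_Icc]; omega
      omega
    omega

private lemma exists_S (C : Finset V) (a : V → ℕ) (m : ℕ) (h1 : 1 ≤ m) (h2 : m ≤ C.card + 1)
    (hA : (C.filter (fun y => a y = m)).card + m ≤ C.card + 1)
    (hB : (C.filter (fun y => a y = C.card + 1 - m)).card ≤ m - 1)
    (hC : m = C.card + 1 - m → (C.filter (fun y => a y = m)).card = 0) :
    ∃ S, S ⊆ C ∧ S.card = m - 1 ∧ (∀ y ∈ S, a y ≠ m) ∧
      (∀ y ∈ C, y ∉ S → a y ≠ C.card + 1 - m) := by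
  classical
  set F := C.filter (fun y => a y = C.card + 1 - m) with hF
  set Gm := C.filter (fun y => a y = m) with hGm
  have hFG : F ⊆ C \ Gm := by
    intro y hy
    rw [hF, Finset.mem_filter] at hy
    rw [Finset.mem_sdiff]
    refine ⟨hy.1, fun hc => ?_⟩
    rw [hGm, Finset.mem_filter] at hc
    have hm : m = C.card + 1 - m := hc.2.symm.trans hy.2
    have h0 := hC hm
    exact Finset.card_ne_zero_of_mem (Finset.mem_filter.mpr hc) h0
  have hGsub : Gm ⊆ C := Finset.filter_subset _ _
  have hcard : m - 1 ≤ (C \ Gm).card := by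
    rw [Finset.card_sdiff_of_subset hGsub]
    omega
  obtain ⟨S, hFS, hSsub, hScard⟩ := Finset.exists_subsuperset_card_eq hFG hB hcard
  refine ⟨S, fun y hy => (Finset.mem_sdiff.mp (hSsub hy)).1, hScard, ?_, ?_⟩
  · intro y hy hay
    have hns := (Finset.mem_sdiff.mp (hSsub hy)).2
    exact hns (Finset.mem_filter.mpr ⟨(Finset.mem_sdiff.mp (hSsub hy)).1, hay⟩)
  · intro y hyC hyS hay
    exact hyS (hFS (Finset.mem_filter.mpr ⟨hyC, hay⟩))

private lemma exists_pair (C : Finset V) (a : V → ℕ) (special : Prop)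
    (hsp : special → C.card = 2) :
    ∃ p : ℕ × Finset V,
      1 ≤ p.1 ∧ p.1 ≤ C.card + 1 ∧ (special → 2 ≤ p.1) ∧ p.2 ⊆ C ∧ p.2.card = p.1 - 1 ∧
      (∀ y ∈ p.2, a y ≠ p.1) ∧ (∀ y ∈ C, y ∉ p.2 → a y ≠ C.card + 1 - p.1) := by
  classical
  by_cases hs : special
  · have h2 := hsp hs
    by_cases h3 : (C.filter (fun y => a y = 3)).card = 0
    · refine ⟨(3, C), by norm_num, by omega, fun _ => by norm_num, subset_rfl,
        by show C.card = 3 - 1; omega, fun y hy hay => ?_, fun y hyC hyS _ => hyS hyC⟩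
      exact Finset.card_ne_zero_of_mem (Finset.mem_filter.mpr ⟨hy, hay⟩) h3
    · have hn23 : (C.filter (fun y => a y = 2)).card + (C.filter (fun y => a y = 3)).card
          ≤ C.card := by
        have := sum_nval_le C a {2, 3}
        rwa [Finset.sum_pair (by norm_num)] at this
      have hn13 : (C.filter (fun y => a y = 1)).card + (C.filter (fun y => a y = 3)).card
          ≤ C.card := by
        have := sum_nval_le C a {1, 3}
        rwa [Finset.sum_pair (by norm_num)] at this
      obtain ⟨S, hsub, hcard, hmem, hnmem⟩ := exists_S C a 2 (by norm_num) (by omega)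
        (by omega) (by rw [h2]; simpa using (by omega : (C.filter (fun y => a y = 1)).card ≤ 1))
        (by omega)
      exact ⟨(2, S), by norm_num, by omega, fun _ => le_rfl, hsub, hcard, hmem, hnmem⟩
  · obtain ⟨m, h1, h2, hA, hB, hC⟩ := exists_good_m C a
    obtain ⟨S, hsub, hcard, hmem, hnmem⟩ := exists_S C a m h1 h2 hA hB hC
    exact ⟨(m, S), h1, h2, fun h => absurd h hs, hsub, hcard, hmem, hnmem⟩

end Counting

section Rooted
variable {V : Type*} [Fintype V] [DecidableEq V]

private def childr (par : V → V) (u x : V) : Finset V :=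
  Finset.univ.filter (fun y => y ≠ u ∧ par y = x)

private lemma mem_childr {par : V → V} {u x y : V} :
    y ∈ childr par u x ↔ y ≠ u ∧ par y = x := by
  simp [childr]

variable (par : V → V) (D : V → ℕ) (u v : V)

private noncomputable def Fms (hpar : ∀ x, x ≠ u → D (par x) + 1 = D x)
    (hDb : ∀ x, D x < Fintype.card V) (hv2 : (childr par u v).card = 2)
    (x : V) : ℕ × Finset V :=
  Classical.choose (exists_pair (childr par u x)
    (fun y => if h : y ∈ childr par u x then (Fms hpar hDb hv2 y).1 else 0)
    (x = v) (fun hxv => by rw [hxv]; exact hv2))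
termination_by Fintype.card V - D x
decreasing_by
  all_goals {
    obtain ⟨hyu, hpy⟩ := mem_childr.mp h
    have h1 := hpar y hyu
    have h2 := hDb y
    rw [hpy] at h1
    omega }

private lemma Fms_spec (hpar : ∀ x, x ≠ u → D (par x) + 1 = D x)
    (hDb : ∀ x, D x < Fintype.card V) (hv2 : (childr par u v).card = 2) (x : V) :
    1 ≤ (Fms par D u v hpar hDb hv2 x).1 ∧
    (Fms par D u v hpar hDb hv2 x).1 ≤ (childr par u x).card + 1 ∧
    (x = v → 2 ≤ (Fms par D u v hpar hDb hv2 x).1) ∧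
    (Fms par D u v hpar hDb hv2 x).2 ⊆ childr par u x ∧
    (Fms par D u v hpar hDb hv2 x).2.card = (Fms par D u v hpar hDb hv2 x).1 - 1 ∧
    (∀ y ∈ (Fms par D u v hpar hDb hv2 x).2,
      (Fms par D u v hpar hDb hv2 y).1 ≠ (Fms par D u v hpar hDb hv2 x).1) ∧
    (∀ y ∈ childr par u x, y ∉ (Fms par D u v hpar hDb hv2 x).2 →
      (Fms par D u v hpar hDb hv2 y).1 ≠
        (childr par u x).card + 1 - (Fms par D u v hpar hDb hv2 x).1) := by
  have he : Fms par D u v hpar hDb hv2 x = Classical.choose (exists_pair (childr par u x)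
      (fun y => if h : y ∈ childr par u x then (Fms par D u v hpar hDb hv2 y).1 else 0)
      (x = v) (fun hxv => by rw [hxv]; exact hv2)) := by
    rw [Fms]
  have h := Classical.choose_spec (exists_pair (childr par u x)
    (fun y => if h : y ∈ childr par u x then (Fms par D u v hpar hDb hv2 y).1 else 0)
    (x = v) (fun hxv => by rw [hxv]; exact hv2))
  rw [← he] at h
  obtain ⟨h1, h2, h3, h4, h5, h6, h7⟩ := h
  refine ⟨h1, h2, h3, h4, h5, fun y hy => ?_, fun y hy hny => ?_⟩
  · have := h6 y hy
    simpa only [dif_pos (h4 hy)] using this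
  · have := h7 y hy hny
    simpa only [dif_pos hy] using this

private noncomputable def fcol (hpar : ∀ x, x ≠ u → D (par x) + 1 = D x)
    (hDb : ∀ x, D x < Fintype.card V) (hv2 : (childr par u v).card = 2)
    (hu0 : D u = 0) (x : V) : Fin 2 :=
  if h : D x ≤ 1 then 0
  else if x ∈ (Fms par D u v hpar hDb hv2 (par x)).2 then
    fcol hpar hDb hv2 hu0 (par x)
  else fcol hpar hDb hv2 hu0 (par x) + 1
termination_by D x
decreasing_by
  all_goals {
    have hxu : x ≠ u := fun hh => by rw [hh, hu0] at h; omega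
    have := hpar x hxu
    omega }

private theorem rooted_main (hpar : ∀ x, x ≠ u → D (par x) + 1 = D x)
    (hDb : ∀ x, D x < Fintype.card V) (hu0 : D u = 0)
    (hchu : childr par u u = {v}) (hv2 : (childr par u v).card = 2) :
    ∃ f : V → Fin 2, ∀ x, ∀ y ∈ childr par u x,
      (((childr par u x).filter (fun z => f z = f y)).card
        + (if x ≠ u ∧ f x = f y then 1 else 0)) ≠
      (((childr par u y).filter (fun z => f z = f y)).card
        + (if y ≠ u ∧ f y = f y then 1 else 0)) := by
  set f := fcol par D u v hpar hDb hv2 hu0 with hf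
  have hfin2 : ∀ i : Fin 2, i ≠ i + 1 := by decide
  have hD1 : ∀ x, x ≠ u → 1 ≤ D x := by
    intro x hx
    have := hpar x hx
    omega
  have hfchild : ∀ x, x ≠ u → ∀ z, z ∈ childr par u x →
      f z = (if z ∈ (Fms par D u v hpar hDb hv2 x).2 then f x else f x + 1) := by
    intro x hx z hz
    obtain ⟨hzu, hpz⟩ := mem_childr.mp hz
    have hDz : D z = D x + 1 := by
      have := hpar z hzu
      rw [hpz] at this
      omega
    rw [hf]
    conv_lhs => rw [fcol]
    rw [dif_neg (by have := hD1 x hx; omega), hpz]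
  have hfv : ∀ z, z ∈ childr par u u → f z = 0 := by
    intro z hz
    obtain ⟨hzu, hpz⟩ := mem_childr.mp hz
    have hDz : D z = 1 := by
      have := hpar z hzu
      rw [hpz, hu0] at this
      omega
    rw [hf]
    conv_lhs => rw [fcol]
    rw [dif_pos (by omega)]
  have hfltS : ∀ x, x ≠ u → (childr par u x).filter (fun z => f z = f x)
      = (Fms par D u v hpar hDb hv2 x).2 := by
    intro x hx
    ext z
    simp only [Finset.mem_filter]
    constructor
    · rintro ⟨hz, hfz⟩
      rw [hfchild x hx z hz] at hfz
      by_contra hns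
      rw [if_neg hns] at hfz
      exact hfin2 (f x) hfz.symm
    · intro hz
      have hzc : z ∈ childr par u x := (Fms_spec par D u v hpar hDb hv2 x).2.2.2.1 hz
      refine ⟨hzc, ?_⟩
      rw [hfchild x hx z hzc, if_pos hz]
  have hfltD : ∀ x, x ≠ u → (childr par u x).filter (fun z => f z = f x + 1)
      = childr par u x \ (Fms par D u v hpar hDb hv2 x).2 := by
    intro x hx
    ext z
    simp only [Finset.mem_filter, Finset.mem_sdiff]
    constructor
    · rintro ⟨hz, hfz⟩
      refine ⟨hz, fun hns => ?_⟩
      rw [hfchild x hx z hz, if_pos hns] at hfz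
      exact hfin2 (f x) hfz
    · rintro ⟨hz, hns⟩
      refine ⟨hz, ?_⟩
      rw [hfchild x hx z hz, if_neg hns]
  refine ⟨f, fun x y hy => ?_⟩
  obtain ⟨hyu, hpy⟩ := mem_childr.mp hy
  have spy := Fms_spec par D u v hpar hDb hv2 y
  have hRHS : ((childr par u y).filter (fun z => f z = f y)).card
      + (if y ≠ u ∧ f y = f y then 1 else 0) = (Fms par D u v hpar hDb hv2 y).1 := by
    rw [hfltS y hyu, if_pos ⟨hyu, rfl⟩]
    have h5 := spy.2.2.2.2.1
    have h1 := spy.1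
    omega
  rw [hRHS]
  by_cases hxu : x = u
  · have hyv : y = v := by
      rw [hxu, hchu] at hy
      simpa using hy
    have hfy : f y = 0 := by
      rw [hxu] at hy
      exact hfv y hy
    have hLHS : ((childr par u x).filter (fun z => f z = f y)).card
        + (if x ≠ u ∧ f x = f y then 1 else 0) = 1 := by
      rw [hxu, hchu, if_neg (by simp)]
      rw [Finset.filter_singleton]
      rw [if_pos (by rw [← hyv])]
      rw [Finset.card_singleton]
    rw [hLHS]
    have h3 := spy.2.2.1 hyv
    omega
  · have spx := Fms_spec par D u v hpar hDb hv2 x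
    by_cases hyS : y ∈ (Fms par D u v hpar hDb hv2 x).2
    · have hfy : f y = f x := by rw [hfchild x hxu y hy, if_pos hyS]
      rw [hfy, hfltS x hxu, if_pos ⟨hxu, rfl⟩]
      have h6 := spx.2.2.2.2.2.1 y hyS
      have h5 := spx.2.2.2.2.1
      have h1 := spx.1
      omega
    · have hfy : f y = f x + 1 := by rw [hfchild x hxu y hy, if_neg hyS]
      rw [hfy, hfltD x hxu, if_neg (fun hc => hfin2 (f x) hc.2)]
      have h7 := spx.2.2.2.2.2.2 y hy hyS
      have h5 := spx.2.2.2.2.1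
      have h1 := spx.1
      have h2 := spx.2.1
      have hcd : (childr par u x \ (Fms par D u v hpar hDb hv2 x).2).card
          = (childr par u x).card - (Fms par D u v hpar hDb hv2 x).2.card :=
        Finset.card_sdiff_of_subset spx.2.2.2.1
      omega

end Rooted

/-- A graph is *locally irregular* if no two adjacent vertices have the same degree. -/
def LocallyIrregular {V : Type*} (G : SimpleGraph V) : Prop :=
  ∀ ⦃u v : V⦄, G.Adj u v → (G.neighborSet u).ncard ≠ (G.neighborSet v).ncard

/-- `HasLIEC G k` : `G` admits a locally irregular edge-coloring using at most `k` colors,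
i.e. an assignment of one of `k` colors to every edge such that the edges of each fixed
color induce a locally irregular graph. -/
def HasLIEC {V : Type*} (G : SimpleGraph V) (k : ℕ) : Prop :=
  ∃ c : Sym2 V → Fin k, ∀ i : Fin k,
    LocallyIrregular (SimpleGraph.fromEdgeSet {e | e ∈ G.edgeSet ∧ c e = i})

/-- If a tree `T` contains an edge `uv` with `d(u) = 1` and `d(v) = 3`, then `T` admits a
locally irregular edge-coloring with at most 2 colors. -/
theorem tree_pendant_deg3_LIEC {V : Type*} [Fintype V] (T : SimpleGraph V)
    (hT : T.IsTree) (u v : V) (huv : T.Adj u v)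
    (hu : (T.neighborSet u).ncard = 1) (hv : (T.neighborSet v).ncard = 3) :
    HasLIEC T 2 := by
  classical
  -- unique paths from the root u
  have hex : ∀ x : V, ∃ p : T.Walk u x, p.IsPath ∧ ∀ q : T.Walk u x, q.IsPath → q = p := by
    intro x
    obtain ⟨p, hp, huniq⟩ := hT.existsUnique_path u x
    exact ⟨p, hp, fun q hq => huniq q hq⟩
  choose pth hpth huniq using hex
  set D : V → ℕ := fun x => (pth x).length with hD
  set par : V → V := fun x => (pth x).getVert ((pth x).length - 1) with hpar0
  -- basic facts
  have g0 : D u = 0 := by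
    have : (SimpleGraph.Walk.nil : T.Walk u u) = pth u :=
      huniq u SimpleGraph.Walk.nil SimpleGraph.Walk.IsPath.nil
    rw [hD]
    simp [← this]
  have g1 : ∀ x, x ≠ u → 1 ≤ D x := by
    intro x hx
    by_contra hc
    have h0 : (pth x).length = 0 := by
      simp only [hD] at hc; omega
    exact hx (SimpleGraph.Walk.eq_of_length_eq_zero h0).symm
  have hDb : ∀ x, D x < Fintype.card V := fun x => (hpth x).length_lt
  have gsup : ∀ x z, ∀ hz : z ∈ (pth x).support, D z ≤ D x := by
    intro x z hz
    have hq : ((pth x).takeUntil z hz).IsPath := (hpth x).takeUntil hz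
    have := huniq z _ hq
    rw [hD]
    simp only
    rw [← this]
    exact SimpleGraph.Walk.length_takeUntil_le _ hz
  have gmem : ∀ x, par x ∈ (pth x).support := by
    intro x
    rw [SimpleGraph.Walk.mem_support_iff_exists_getVert]
    exact ⟨(pth x).length - 1, rfl, by omega⟩
  have gadj : ∀ x, x ≠ u → T.Adj (par x) x := by
    intro x hx
    have h1 : 1 ≤ (pth x).length := g1 x hx
    have := (pth x).adj_getVert_succ (i := (pth x).length - 1) (by omega)
    rw [Nat.sub_add_cancel h1, SimpleGraph.Walk.getVert_length] at this
    exact this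
  have gcon : ∀ x y (h : T.Adj x y), pth y = (pth x).concat h → par y = x ∧ D y = D x + 1 := by
    intro x y h he
    have hlen : D y = D x + 1 := by
      rw [hD]
      simp only
      rw [he, SimpleGraph.Walk.length_concat]
    refine ⟨?_, hlen⟩
    rw [hpar0]
    simp only
    rw [he, SimpleGraph.Walk.length_concat, SimpleGraph.Walk.concat_eq_append,
      SimpleGraph.Walk.getVert_append]
    rw [if_neg (by omega)]
    have : (pth x).length + 1 - 1 - (pth x).length = 0 := by omega
    rw [this]
    exact SimpleGraph.Walk.getVert_zero _
  have gL1 : ∀ x y, T.Adj x y →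
      (y ≠ u ∧ par y = x ∧ D y = D x + 1) ∨ (x ≠ u ∧ par x = y ∧ D x = D y + 1) := by
    intro x y h
    by_cases hxs : x ∈ (pth y).support
    · left
      have htk : (pth y).takeUntil x hxs = pth x := huniq x _ ((hpth y).takeUntil hxs)
      have hsing : (SimpleGraph.Walk.cons h SimpleGraph.Walk.nil : T.Walk x y).IsPath := by
        simp [SimpleGraph.Walk.isPath_def, h.ne]
      have hdr : (pth y).dropUntil x hxs = SimpleGraph.Walk.cons h SimpleGraph.Walk.nil := by
        obtain ⟨p, hp, hun⟩ := hT.existsUnique_path x y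
        rw [hun _ ((hpth y).dropUntil hxs), hun _ hsing]
      have he : pth y = (pth x).concat h := by
        rw [SimpleGraph.Walk.concat_eq_append, ← htk, ← hdr, SimpleGraph.Walk.take_spec]
      obtain ⟨hp, hl⟩ := gcon x y h he
      refine ⟨?_, hp, hl⟩
      intro hyu
      rw [hyu, g0] at hl
      omega
    · right
      have hcp : ((pth y).concat h.symm).IsPath := by
        rw [SimpleGraph.Walk.isPath_def, SimpleGraph.Walk.support_concat,
          List.nodup_append']
        refine ⟨(hpth y).support_nodup, List.nodup_singleton x, ?_⟩
        intro z hz hz'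
        rw [List.mem_singleton] at hz'
        exact hxs (hz' ▸ hz)
      have he : pth x = (pth y).concat h.symm := (huniq x _ hcp).symm
      obtain ⟨hp, hl⟩ := gcon y x h.symm he
      refine ⟨?_, hp, hl⟩
      intro hxu
      rw [hxu, g0] at hl
      omega
  have hpar : ∀ x, x ≠ u → D (par x) + 1 = D x := by
    intro x hx
    rcases gL1 (par x) x (gadj x hx) with ⟨_, _, hl⟩ | ⟨_, _, hl⟩
    · omega
    · have := gsup x (par x) (gmem x)
      omega
  -- children membership implies adjacency and depth
  have gchadj : ∀ x z, z ∈ childr par u x → T.Adj x z ∧ D z = D x + 1 := by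
    intro x z hz
    obtain ⟨hzu, hpz⟩ := mem_childr.mp hz
    have := gadj z hzu
    rw [hpz] at this
    have hd := hpar z hzu
    rw [hpz] at hd
    exact ⟨this, by omega⟩
  -- the neighbor finset decomposition
  have gnb : ∀ x, x ≠ u → T.neighborFinset x = insert (par x) (childr par u x) := by
    intro x hx
    ext z
    rw [SimpleGraph.mem_neighborFinset, Finset.mem_insert]
    constructor
    · intro h
      rcases gL1 x z h with ⟨h1, h2, _⟩ | ⟨_, h2, _⟩
      · exact Or.inr (mem_childr.mpr ⟨h1, h2⟩)
      · exact Or.inl h2.symm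
    · rintro (rfl | hz)
      · exact (gadj x hx).symm
      · exact (gchadj x z hz).1
  have gparnot : ∀ x, x ≠ u → par x ∉ childr par u x := by
    intro x hx hmem
    have h1 := (gchadj x (par x) hmem).2
    have h2 := hpar x hx
    omega
  have gnbu : T.neighborFinset u = childr par u u := by
    ext z
    rw [SimpleGraph.mem_neighborFinset]
    constructor
    · intro h
      rcases gL1 u z h with ⟨h1, h2, _⟩ | ⟨h1, _, _⟩
      · exact mem_childr.mpr ⟨h1, h2⟩
      · exact absurd rfl h1
    · intro hz
      exact (gchadj u z hz).1
  -- converting the degree hypotheses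
  have hcard : ∀ x, (T.neighborSet x).ncard = (T.neighborFinset x).card := by
    intro x
    rw [SimpleGraph.neighborFinset_def, Set.ncard_eq_toFinset_card']
  have hvu : v ≠ u := huv.ne'
  have hchu : childr par u u = {v} := by
    rw [← gnbu]
    have h1 : (T.neighborFinset u).card = 1 := by rw [← hcard]; exact hu
    obtain ⟨a, ha⟩ := Finset.card_eq_one.mp h1
    have hva : v ∈ T.neighborFinset u := (SimpleGraph.mem_neighborFinset _ _ _).mpr huv
    rw [ha] at hva ⊢
    rw [Finset.mem_singleton] at hva
    rw [hva]
  have hv2 : (childr par u v).card = 2 := by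
    have h3 : (T.neighborFinset v).card = 3 := by rw [← hcard]; exact hv
    rw [gnb v hvu, Finset.card_insert_of_notMem (gparnot v hvu)] at h3
    omega
  -- get the coloring of vertices
  obtain ⟨f, hfprop⟩ := rooted_main par D u v hpar hDb g0 hchu hv2
  -- the edge coloring
  set c : Sym2 V → Fin 2 := Sym2.lift ⟨fun x y => if D x < D y then f y
    else if D y < D x then f x else 0, by
      intro x y
      simp only
      split_ifs <;> first | rfl | omega⟩ with hc
  have hcedge : ∀ x z, z ∈ childr par u x → c s(x, z) = f z := by
    intro x z hz
    have hd := (gchadj x z hz).2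
    rw [hc, Sym2.lift_mk]
    simp only
    rw [if_pos (by omega)]
  have hcpar : ∀ x, x ≠ u → c s(x, par x) = f x := by
    intro x hx
    have hd := hpar x hx
    rw [hc, Sym2.lift_mk]
    simp only
    rw [if_neg (by omega), if_pos (by omega)]
  -- neighbor sets in the color classes
  have hNB : ∀ (i : Fin 2) (x : V),
      ((SimpleGraph.fromEdgeSet {e | e ∈ T.edgeSet ∧ c e = i}).neighborSet x).ncard
      = ((childr par u x).filter (fun z => f z = i)).card
        + (if x ≠ u ∧ f x = i then 1 else 0) := by
    intro i x
    have hset : (SimpleGraph.fromEdgeSet {e | e ∈ T.edgeSet ∧ c e = i}).neighborSet x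
        = ↑((T.neighborFinset x).filter (fun z => c s(x, z) = i)) := by
      ext z
      simp only [SimpleGraph.mem_neighborSet, SimpleGraph.fromEdgeSet_adj, Set.mem_setOf_eq,
        Finset.coe_filter, SimpleGraph.mem_neighborFinset, SimpleGraph.mem_edgeSet]
      constructor
      · rintro ⟨⟨h1, h2⟩, _⟩
        exact ⟨h1, h2⟩
      · rintro ⟨h1, h2⟩
        exact ⟨⟨h1, h2⟩, h1.ne⟩
    rw [hset, Set.ncard_coe_finset]
    by_cases hxu : x = u
    · rw [hxu, gnbu, if_neg (by simp)]
      rw [Finset.filter_congr (fun z hz => by rw [hcedge u z hz])]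
      omega
    · rw [gnb x hxu, Finset.filter_insert, hcpar x hxu]
      have hflt : (childr par u x).filter (fun z => c s(x, z) = i)
          = (childr par u x).filter (fun z => f z = i) :=
        Finset.filter_congr (fun z hz => by rw [hcedge x z hz])
      by_cases hfx : f x = i
      · rw [if_pos hfx, if_pos ⟨hxu, hfx⟩,
          Finset.card_insert_of_notMem (fun hmem => gparnot x hxu (Finset.filter_subset _ _ hmem)),
          hflt]
      · rw [if_neg hfx, if_neg (fun hcon => hfx hcon.2), hflt]
        omega
  -- conclusion
  refine ⟨c, fun i => ?_⟩
  intro a b hab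
  rw [SimpleGraph.fromEdgeSet_adj] at hab
  obtain ⟨⟨hTe, hci⟩, hne⟩ := hab
  rw [SimpleGraph.mem_edgeSet] at hTe
  rw [hNB i a, hNB i b]
  rcases gL1 a b hTe with ⟨h1, h2, _⟩ | ⟨h1, h2, _⟩
  · have hmem : b ∈ childr par u a := mem_childr.mpr ⟨h1, h2⟩
    have hib : i = f b := by rw [← hci, hcedge a b hmem]
    rw [hib]
    exact hfprop a b hmem
  · have hmem : a ∈ childr par u b := mem_childr.mpr ⟨h1, h2⟩
    have hia : i = f a := by
      rw [← hci, Sym2.eq_swap, hcedge b a hmem]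
    rw [hia]
    exact (hfprop b a hmem).symm
end

section
/- If a cubic (3-regular) graph G contains as a subgraph two diamonds connected by an edge (i.e., vertices u_1, u_2, u_3, u_4, v_1, v_2, v_3, v_4 with edges u_1u_2, u_1u_3, u_2u_3, u_2u_4, u_3u_4, v_1v_2, v_1v_3, v_2v_3, v_2v_4, v_3v_4, and u_1v_1), then χ'_irr(G) ≥ 3, i.e., G admits no locally irregular edge-coloring using at most 2 colors. -/
/-- The colours of a diamond `u₁u₂u₃u₄` (missing edge `u₁u₄`) with pendant edges at `u₁` and
`u₄`: `a = u₁u₂`, `b = u₁u₃`, `m = u₂u₃`, `d = u₂u₄`, `f = u₃u₄`, and `e`, `h` the pendant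
edges at `u₁`, `u₄`. -/
theorem diamond_pendant_count_eq_two (a b m d f e h : Fin 2)
    (h₁₂ : [a, b, e].count a ≠ [a, m, d].count a) (h₁₃ : [a, b, e].count b ≠ [b, m, f].count b)
    (h₂₃ : [a, m, d].count m ≠ [b, m, f].count m) (h₂₄ : [a, m, d].count d ≠ [d, f, h].count d)
    (h₃₄ : [b, m, f].count f ≠ [d, f, h].count f) :
    [a, b, e].count e = 2 := by
  revert a b m d f e h
  decide

namespace SimpleGraph

variable {V α : Type*} (G : SimpleGraph V)

def colorClass (c : Sym2 V → α) (i : α) : SimpleGraph V :=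
  fromEdgeSet {e | e ∈ G.edgeSet ∧ c e = i}

variable {G}

theorem colorClass_adj {c : Sym2 V → α} {i : α} {x y : V} :
    (G.colorClass c i).Adj x y ↔ G.Adj x y ∧ c s(x, y) = i := by
  simp only [colorClass, fromEdgeSet_adj, Set.mem_ofPred_eq, mem_edgeSet]
  exact ⟨fun h => h.1, fun h => ⟨h, h.1.ne⟩⟩

theorem neighborSet_eq_of_ncard_eq_three {x p q r : V} (hx : (G.neighborSet x).ncard = 3)
    (hp : G.Adj x p) (hq : G.Adj x q) (hr : G.Adj x r) (hpq : p ≠ q) (hpr : p ≠ r)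
    (hqr : q ≠ r) : G.neighborSet x = {p, q, r} := by
  have hsub : ({p, q, r} : Set V) ⊆ G.neighborSet x := by
    rintro y (rfl | rfl | rfl) <;> assumption
  have hcard : ({p, q, r} : Set V).ncard = 3 := Set.ncard_eq_three.2 ⟨p, q, r, hpq, hpr, hqr, rfl⟩
  exact (Set.eq_of_subset_of_ncard_le hsub (by rw [hx, hcard])
    (Set.finite_of_ncard_pos (by omega))).symm

theorem exists_adj_ne_ne_of_ncard_eq_three {x p q : V} (hx : (G.neighborSet x).ncard = 3)
    (hpq : p ≠ q) : ∃ w, G.Adj x w ∧ w ≠ p ∧ w ≠ q := by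
  have hnot : ¬ G.neighborSet x ⊆ {p, q} := fun h => by
    have := Set.ncard_le_ncard h (Set.toFinite _)
    rw [hx, Set.ncard_pair hpq] at this
    omega
  obtain ⟨w, hw, hwpq⟩ := Set.not_subset.1 hnot
  simp only [Set.mem_insert_iff, Set.mem_singleton_iff, not_or] at hwpq
  exact ⟨w, hw, hwpq⟩

theorem ncard_neighborSet_colorClass [DecidableEq α] {x p q r : V}
    (hN : G.neighborSet x = {p, q, r}) (hpq : p ≠ q) (hpr : p ≠ r) (hqr : q ≠ r)
    (c : Sym2 V → α) (i : α) :
    ((G.colorClass c i).neighborSet x).ncard = [c s(x, p), c s(x, q), c s(x, r)].count i := by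
  classical
  have hset : (G.colorClass c i).neighborSet x =
      ↑(({p, q, r} : Finset V).filter fun y => c s(x, y) = i) := by
    ext y
    rw [mem_neighborSet, colorClass_adj, ← mem_neighborSet, hN]
    simp
  rw [hset, Set.ncard_coe_finset, Finset.card_filter, Finset.sum_insert (by simp [hpq, hpr]),
    Finset.sum_insert (by simp [hqr]), Finset.sum_singleton]
  simp only [List.count_cons, List.count_nil, beq_iff_eq]
  omega

theorem ncard_neighborSet_colorClass_of_diamond (hcubic : ∀ v, (G.neighborSet v).ncard = 3)
    {c : Sym2 V → Fin 2} (hc : ∀ i, LocallyIrregular (G.colorClass c i)) {u₁ u₂ u₃ u₄ x : V}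
    (h₁₂ : G.Adj u₁ u₂) (h₁₃ : G.Adj u₁ u₃) (h₂₃ : G.Adj u₂ u₃) (h₂₄ : G.Adj u₂ u₄)
    (h₃₄ : G.Adj u₃ u₄) (hx : G.Adj u₁ x) (hu₁₄ : u₁ ≠ u₄) (hx₂ : x ≠ u₂) (hx₃ : x ≠ u₃) :
    ((G.colorClass c (c s(u₁, x))).neighborSet u₁).ncard = 2 := by
  obtain ⟨w, hw, hw₂, hw₃⟩ := exists_adj_ne_ne_of_ncard_eq_three (hcubic u₄) h₂₃.ne
  have hN₁ := neighborSet_eq_of_ncard_eq_three (hcubic u₁) h₁₂ h₁₃ hx h₂₃.ne hx₂.symm hx₃.symm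
  have hN₂ := neighborSet_eq_of_ncard_eq_three (hcubic u₂) h₁₂.symm h₂₃ h₂₄ h₁₃.ne hu₁₄ h₃₄.ne
  have hN₃ := neighborSet_eq_of_ncard_eq_three (hcubic u₃) h₁₃.symm h₂₃.symm h₃₄ h₁₂.ne hu₁₄ h₂₄.ne
  have hN₄ := neighborSet_eq_of_ncard_eq_three (hcubic u₄) h₂₄.symm h₃₄.symm hw h₂₃.ne hw₂.symm
    hw₃.symm
  have irr : ∀ {y z}, G.Adj y z → ((G.colorClass c (c s(y, z))).neighborSet y).ncard ≠
      ((G.colorClass c (c s(y, z))).neighborSet z).ncard :=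
    fun h => hc _ (colorClass_adj.2 ⟨h, rfl⟩)
  have d₁ := ncard_neighborSet_colorClass hN₁ h₂₃.ne hx₂.symm hx₃.symm c
  have d₂ := ncard_neighborSet_colorClass hN₂ h₁₃.ne hu₁₄ h₃₄.ne c
  have d₃ := ncard_neighborSet_colorClass hN₃ h₁₂.ne hu₁₄ h₂₄.ne c
  have d₄ := ncard_neighborSet_colorClass hN₄ h₂₃.ne hw₂.symm hw₃.symm c
  rw [d₁]
  exact diamond_pendant_count_eq_two _ _ (c s(u₂, u₃)) (c s(u₂, u₄)) (c s(u₃, u₄)) _ (c s(u₄, w))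
    (by simpa only [d₁, d₂, Sym2.eq_swap] using irr h₁₂)
    (by simpa only [d₁, d₃, Sym2.eq_swap] using irr h₁₃)
    (by simpa only [d₂, d₃, Sym2.eq_swap] using irr h₂₃)
    (by simpa only [d₂, d₄, Sym2.eq_swap] using irr h₂₄)
    (by simpa only [d₃, d₄, Sym2.eq_swap] using irr h₃₄)

end SimpleGraph

theorem cubic_two_diamonds_no_2LIEC_general {V : Type*} (G : SimpleGraph V)
    (hcubic : ∀ v : V, (G.neighborSet v).ncard = 3)
    (u1 u2 u3 u4 v1 v2 v3 v4 : V)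
    (hdist : List.Pairwise (· ≠ ·) [u1, u2, u3, u4, v1, v2, v3, v4])
    (e1 : G.Adj u1 u2) (e2 : G.Adj u1 u3) (e3 : G.Adj u2 u3)
    (e4 : G.Adj u2 u4) (e5 : G.Adj u3 u4)
    (e6 : G.Adj v1 v2) (e7 : G.Adj v1 v3) (e8 : G.Adj v2 v3)
    (e9 : G.Adj v2 v4) (e10 : G.Adj v3 v4)
    (e11 : G.Adj u1 v1) :
    ¬ HasLIEC G 2 := by
  rintro ⟨c, hc⟩
  simp only [List.pairwise_cons, List.mem_cons, List.not_mem_nil, or_false, forall_eq_or_imp,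
    forall_eq] at hdist
  obtain ⟨⟨-, -, hu₁₄, -, hu₁v₂, hu₁v₃, -⟩, ⟨-, -, hu₂v₁, -⟩, ⟨-, hu₃v₁, -⟩, -, ⟨-, -, hv₁₄⟩, -⟩ :=
    hdist
  have hu := SimpleGraph.ncard_neighborSet_colorClass_of_diamond hcubic hc e1 e2 e3 e4 e5 e11
    hu₁₄ hu₂v₁.symm hu₃v₁.symm
  have hv := SimpleGraph.ncard_neighborSet_colorClass_of_diamond hcubic hc e6 e7 e8 e9 e10
    e11.symm hv₁₄ hu₁v₂ hu₁v₃
  rw [Sym2.eq_swap] at hv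
  exact hc _ (SimpleGraph.colorClass_adj.2 ⟨e11, rfl⟩) (hu.trans hv.symm)

/-- If a cubic graph `G` contains two diamonds connected by an edge as a subgraph, then `G`
admits no locally irregular edge-coloring with at most 2 colors. -/
theorem cubic_two_diamonds_no_2LIEC {V : Type*} [Fintype V] (G : SimpleGraph V)
    (hcubic : ∀ v : V, (G.neighborSet v).ncard = 3)
    (u1 u2 u3 u4 v1 v2 v3 v4 : V)
    (hdist : List.Pairwise (· ≠ ·) [u1, u2, u3, u4, v1, v2, v3, v4])
    (e1 : G.Adj u1 u2) (e2 : G.Adj u1 u3) (e3 : G.Adj u2 u3)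
    (e4 : G.Adj u2 u4) (e5 : G.Adj u3 u4)
    (e6 : G.Adj v1 v2) (e7 : G.Adj v1 v3) (e8 : G.Adj v2 v3)
    (e9 : G.Adj v2 v4) (e10 : G.Adj v3 v4)
    (e11 : G.Adj u1 v1) :
    ¬ HasLIEC G 2 :=
  cubic_two_diamonds_no_2LIEC_general G hcubic u1 u2 u3 u4 v1 v2 v3 v4 hdist e1 e2 e3 e4 e5 e6 e7 e8
    e9 e10 e11
end

section
/- Let G be a connected decomposable claw-free graph with maximum degree 3 such that χ'_irr(G) > 3 and every decomposable claw-free graph with maximum degree at most 3 and fewer edges than G has locally irregular chromatic index at most 3. Then G contains no 4-cycle incident with two consecutive (adjacent) vertices of degree 2. -/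
/-- A graph is *decomposable* if it admits a locally irregular edge-coloring. -/
def Decomposable {V : Type*} (G : SimpleGraph V) : Prop :=
  ∃ k : ℕ, HasLIEC G k

/-- A graph is *claw-free* if it contains no induced subgraph isomorphic to `K_{1,3}`. -/
def ClawFree {V : Type*} (G : SimpleGraph V) : Prop :=
  ¬ ∃ v a b c : V, a ≠ b ∧ a ≠ c ∧ b ≠ c ∧
      G.Adj v a ∧ G.Adj v b ∧ G.Adj v c ∧ ¬ G.Adj a b ∧ ¬ G.Adj a c ∧ ¬ G.Adj b c

/-- `G` has maximum degree at most `d`. -/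
def MaxDegreeLE {V : Type*} (G : SimpleGraph V) (d : ℕ) : Prop :=
  ∀ v : V, (G.neighborSet v).ncard ≤ d

/-!
Let `a b c d` be the 4-cycle. If `c` and `d` also have degree 2, the cycle is a component of `G`
and splits into two paths of length 2. Otherwise, say `d` has a third neighbor `e`; claw-freeness
at `d` forces `ce` to be an edge, so `a b c d e` is a house. If `e` has degree 2, the house is a
component and splits into three paths of length 2. Otherwise `e` has a third neighbor `g`. Fix a
locally irregular coloring of `G` and let `t` be the color of `eg`.

* If `g` has degree 1 in class `t`, delete the three edges at `a`, `b`. The rest stays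
  decomposable (give `cd`, `ce` a fresh color and move `de` into class `t`), so minimality colors
  it with 3 colors; exactly one of `ce`, `de` then shares the color of `cd`, and the three edges
  are put back: `ab`, `ad` in the third color and `bc` in the color of `cd`.
* Otherwise delete the six edges at `a, b, c, d`: `e` becomes a leaf of class `t`, so the
  restricted coloring is still locally irregular, minimality gives 3 colors, and the six edges are
  put back as three paths of length 2 centered at `b`, `d`, `e`.
-/

theorem Set.eq_pair_of_ncard_eq_two {α : Type*} {s : Set α} {x y : α} (h : s.ncard = 2)
    (hx : x ∈ s) (hy : y ∈ s) (hxy : x ≠ y) : s = {x, y} :=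
  (Set.eq_of_subset_of_ncard_le (Set.insert_subset hx (Set.singleton_subset_iff.mpr hy))
    (by rw [h, Set.ncard_pair hxy]) (Set.finite_of_ncard_ne_zero (by omega))).symm

theorem Set.exists_eq_triple_of_ncard_eq_three {α : Type*} {s : Set α} {x y : α}
    (h : s.ncard = 3) (hx : x ∈ s) (hy : y ∈ s) (hxy : x ≠ y) :
    ∃ z, z ≠ x ∧ z ≠ y ∧ s = {x, y, z} := by
  have h1 : ((s \ {x}) \ {y}).ncard = 1 := by
    rw [Set.ncard_sdiff_singleton_of_mem (show y ∈ s \ {x} from ⟨hy, hxy.symm⟩),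
      Set.ncard_sdiff_singleton_of_mem hx, h]
  obtain ⟨z, hz⟩ := Set.ncard_eq_one.mp h1
  have hzs : z ∈ (s \ {x}) \ {y} := hz ▸ rfl
  simp only [Set.mem_sdiff, Set.mem_singleton_iff] at hzs
  refine ⟨z, hzs.1.2, hzs.2, Set.ext fun w => ?_⟩
  have hw := congrArg (w ∈ ·) hz
  simp only [Set.mem_sdiff, Set.mem_singleton_iff, eq_iff_iff] at hw
  by_cases hwx : w = x <;> by_cases hwy : w = y <;> simp_all

theorem Fin.exists_ne_ne_three : ∀ x y : Fin 3, ∃ z, z ≠ x ∧ z ≠ y := by decide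

namespace SimpleGraph

variable {V W α β : Type*}

/-- `HasLIEC G k` unfolds to `∃ f : Sym2 V → Fin k, G.IsLIEC f`. -/
def IsLIEC (G : SimpleGraph V) (f : Sym2 V → α) : Prop :=
  ∀ i, LocallyIrregular (fromEdgeSet {e | e ∈ G.edgeSet ∧ f e = i})

noncomputable def colorDeg (G : SimpleGraph V) (f : Sym2 V → α) (i : α) (v : V) : ℕ :=
  {w | G.Adj v w ∧ f s(v, w) = i}.ncard

section colorDeg

variable {G G' : SimpleGraph V} {f : Sym2 V → α} {f' : Sym2 V → β}

theorem neighborSet_fromEdgeSet_colorClass (i : α) (v : V) :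
    (fromEdgeSet {e | e ∈ G.edgeSet ∧ f e = i}).neighborSet v =
      {w | G.Adj v w ∧ f s(v, w) = i} := by
  ext w
  simp only [mem_neighborSet, fromEdgeSet_adj, Set.mem_ofPred_eq, mem_edgeSet]
  exact ⟨fun h => h.1, fun h => ⟨h, h.1.ne⟩⟩

theorem isLIEC_iff : G.IsLIEC f ↔
    ∀ ⦃u v⦄, G.Adj u v → G.colorDeg f (f s(u, v)) u ≠ G.colorDeg f (f s(u, v)) v := by
  simp only [IsLIEC, LocallyIrregular, neighborSet_fromEdgeSet_colorClass, fromEdgeSet_adj,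
    Set.mem_ofPred_eq, mem_edgeSet]
  exact ⟨fun h u v huv => h _ ⟨⟨huv, rfl⟩, huv.ne⟩, fun h i u v huv => huv.1.2 ▸ h huv.1.1⟩

theorem colorDeg_congr {i : α} {j : β} {v : V}
    (h : ∀ w, G.Adj v w ∧ f s(v, w) = i ↔ G'.Adj v w ∧ f' s(v, w) = j) :
    G.colorDeg f i v = G'.colorDeg f' j v :=
  congrArg Set.ncard (Set.ext h)

theorem colorDeg_comp {φ : α → β} (hφ : φ.Injective) (i : α) (v : V) :
    G.colorDeg (φ ∘ f) (φ i) v = G.colorDeg f i v :=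
  colorDeg_congr fun _ => and_congr_right' hφ.eq_iff

theorem colorDeg_eq_card_filter [DecidableEq V] [DecidableEq α] {v : V} {N : Finset V}
    (hN : G.neighborSet v = N) (i : α) :
    G.colorDeg f i v = (N.filter fun w => f s(v, w) = i).card := by
  rw [colorDeg, ← Set.ncard_coe_finset, Finset.coe_filter]
  congr 1
  ext w
  simp [← Finset.mem_coe, ← hN]

theorem IsLIEC.comp {φ : α → β} (hf : G.IsLIEC f) (hφ : φ.Injective) : G.IsLIEC (φ ∘ f) := by
  rw [isLIEC_iff] at hf ⊢
  intro u v huv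
  simpa only [Function.comp_apply, colorDeg_comp hφ] using hf huv

theorem colorDeg_eq_of_agree {f₁ : Sym2 V → α} {u : V}
    (hadj : ∀ w, G'.Adj u w ↔ G.Adj u w) (hcol : ∀ w, G.Adj u w → f₁ s(u, w) = f s(u, w))
    (i : α) : G'.colorDeg f₁ i u = G.colorDeg f i u :=
  colorDeg_congr fun w => by
    rw [hadj w]
    exact ⟨fun h => ⟨h.1, hcol w h.1 ▸ h.2⟩, fun h => ⟨h.1, (hcol w h.1).symm ▸ h.2⟩⟩

theorem IsLIEC.of_agree_off {f₁ : Sym2 V → α} (hf : G.IsLIEC f) (L : Set V)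
    (hadj : ∀ u ∉ L, ∀ w, G'.Adj u w ↔ G.Adj u w)
    (hcol : ∀ u ∉ L, ∀ w, G.Adj u w → f₁ s(u, w) = f s(u, w))
    (hloc : ∀ u ∈ L, ∀ w ∈ G'.neighborSet u,
      G'.colorDeg f₁ (f₁ s(u, w)) u ≠ G'.colorDeg f₁ (f₁ s(u, w)) w) :
    G'.IsLIEC f₁ := by
  rw [isLIEC_iff] at hf ⊢
  intro u w huw
  by_cases hu : u ∈ L
  · exact hloc u hu w huw
  by_cases hw : w ∈ L
  · rw [Sym2.eq_swap]
    exact (hloc w hw u huw.symm).symm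
  have huw' := (hadj u hu w).mp huw
  rw [colorDeg_eq_of_agree (hadj u hu) (hcol u hu), colorDeg_eq_of_agree (hadj w hw) (hcol w hw),
    hcol u hu w huw']
  exact hf huw'

end colorDeg

section comap

variable {H : SimpleGraph V}

theorem ncard_preimage_equiv (e : W ≃ V) (s : Set V) : (e ⁻¹' s).ncard = s.ncard :=
  Set.ncard_preimage_of_injective_subset_range e.injective (by simp)

theorem colorDeg_comap (e : W ≃ V) (f : Sym2 V → α) (i : α) (x : W) :
    (H.comap e).colorDeg (f ∘ Sym2.map e) i x = H.colorDeg f i (e x) :=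
  ncard_preimage_equiv e {w | H.Adj (e x) w ∧ f s(e x, w) = i}

theorem IsLIEC.comap {f : Sym2 V → α} (hf : H.IsLIEC f) (e : W ≃ V) :
    (H.comap e).IsLIEC (f ∘ Sym2.map e) := by
  rw [isLIEC_iff] at hf ⊢
  intro u v huv
  simpa [colorDeg_comap] using hf huv

theorem _root_.ClawFree.comap (hH : ClawFree H) (e : W ≃ V) : ClawFree (H.comap e) := by
  rintro ⟨v, x, y, z, hxy, hxz, hyz, hvx, hvy, hvz, hnxy, hnxz, hnyz⟩
  exact hH ⟨e v, e x, e y, e z, by simpa, by simpa, by simpa, hvx, hvy, hvz, hnxy, hnxz, hnyz⟩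

theorem _root_.MaxDegreeLE.comap {d : ℕ} (hH : MaxDegreeLE H d) (e : W ≃ V) :
    MaxDegreeLE (H.comap e) d := fun x =>
  (ncard_preimage_equiv e (H.neighborSet (e x))).trans_le (hH (e x))

theorem ncard_edgeSet_comap (e : W ≃ V) : (H.comap e).edgeSet.ncard = H.edgeSet.ncard := by
  rw [← Nat.card_coe_set_eq, ← Nat.card_coe_set_eq]
  exact Nat.card_congr (Iso.comap e H).mapEdgeSet

end comap

def HasLIECBelow (k m : ℕ) : Prop :=
  ∀ (W : Type) [Fintype W] (K : SimpleGraph W),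
    Decomposable K → ClawFree K → MaxDegreeLE K 3 → K.edgeSet.ncard < m → HasLIEC K k

/-- `HasLIECBelow` only speaks about vertex types in `Type`, so transport along
`Fintype.equivFin`. -/
theorem HasLIECBelow.hasLIEC [Fintype V] {H : SimpleGraph V} {k m : ℕ}
    (hmin : HasLIECBelow k m) (hdec : Decomposable H) (hclaw : ClawFree H)
    (hdeg : MaxDegreeLE H 3) (hlt : H.edgeSet.ncard < m) : HasLIEC H k := by
  let e := (Fintype.equivFin V).symm
  obtain ⟨l, f, hf⟩ := hdec
  obtain ⟨g, hg⟩ := hmin _ (H.comap e) ⟨l, f ∘ Sym2.map e, IsLIEC.comap hf e⟩ (hclaw.comap e)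
    (hdeg.comap e) (by rwa [ncard_edgeSet_comap])
  have hback : (H.comap e).comap e.symm = H := by ext; simp
  exact ⟨g ∘ Sym2.map e.symm, hback ▸ IsLIEC.comap hg e.symm⟩

def isolate (G : SimpleGraph V) (S : Set V) : SimpleGraph V where
  Adj u v := G.Adj u v ∧ u ∉ S ∧ v ∉ S
  symm := ⟨fun _ _ h => ⟨h.1.symm, h.2.2, h.2.1⟩⟩
  loopless := ⟨fun v h => G.loopless.irrefl v h.1⟩

section isolate

variable {G : SimpleGraph V} {S : Set V}

@[simp]
theorem isolate_adj {u v : V} : (G.isolate S).Adj u v ↔ G.Adj u v ∧ u ∉ S ∧ v ∉ S :=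
  Iff.rfl

theorem isolate_le : G.isolate S ≤ G := fun _ _ h => h.1

theorem neighborSet_isolate {v : V} (hv : v ∉ S) :
    (G.isolate S).neighborSet v = G.neighborSet v \ S := by
  ext w
  simp [hv]

theorem isolate_adj_iff_of_notMem {L : Set V} (hSL : S ⊆ L)
    (hN : ∀ v ∈ S, G.neighborSet v ⊆ L) : ∀ u ∉ L, ∀ w, (G.isolate S).Adj u w ↔ G.Adj u w :=
  fun _ hu w => ⟨fun h => h.1, fun h => ⟨h, fun huS => hu (hSL huS),
    fun hwS => hu (hN w hwS h.symm)⟩⟩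

theorem _root_.ClawFree.isolate (hG : ClawFree G) : ClawFree (G.isolate S) := by
  rintro ⟨v, x, y, z, hxy, hxz, hyz, hvx, hvy, hvz, hnxy, hnxz, hnyz⟩
  exact hG ⟨v, x, y, z, hxy, hxz, hyz, hvx.1, hvy.1, hvz.1,
    fun h => hnxy ⟨h, hvx.2.2, hvy.2.2⟩, fun h => hnxz ⟨h, hvx.2.2, hvz.2.2⟩,
    fun h => hnyz ⟨h, hvy.2.2, hvz.2.2⟩⟩

theorem _root_.MaxDegreeLE.isolate [Finite V] {d : ℕ} (hG : MaxDegreeLE G d) :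
    MaxDegreeLE (G.isolate S) d := fun v =>
  (Set.ncard_le_ncard (fun _ h => h.1) (Set.toFinite _)).trans (hG v)

theorem ncard_edgeSet_isolate_lt [Finite V] {u v : V} (huv : G.Adj u v) (hu : u ∈ S) :
    (G.isolate S).edgeSet.ncard < G.edgeSet.ncard :=
  Set.ncard_lt_ncard (edgeSet_strict_mono (isolate_le.lt_of_ne fun h =>
    (show (G.isolate S).Adj u v by rwa [h]).2.1 hu)) (Set.toFinite _)

end isolate

theorem ne_of_neighborSet_eq_pair {G : SimpleGraph V} {v x y : V}
    (h : G.neighborSet v = {x, y}) : v ≠ x ∧ v ≠ y :=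
  ⟨G.ne_of_adj (show x ∈ G.neighborSet v by simp [h]),
    G.ne_of_adj (show y ∈ G.neighborSet v by simp [h])⟩

section triangle

variable {K : SimpleGraph V} {f : Sym2 V → α} {c d e g : V}

/-- `c` and `d` must have different degrees in the class of `cd`. -/
theorem IsLIEC.color_eq_iff_ne (hf : K.IsLIEC f) (hNc : K.neighborSet c = {d, e})
    (hNd : K.neighborSet d = {c, e}) : f s(c, e) = f s(c, d) ↔ f s(d, e) ≠ f s(c, d) := by
  classical
  have hcd : K.Adj c d := show d ∈ K.neighborSet c by simp [hNc]
  have hce : c ≠ e := K.ne_of_adj (show e ∈ K.neighborSet c by simp [hNc])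
  have hde : d ≠ e := K.ne_of_adj (show e ∈ K.neighborSet d by simp [hNd])
  have h := isLIEC_iff.mp hf hcd
  rw [colorDeg_eq_card_filter (N := {d, e}) (by simp [hNc]),
    colorDeg_eq_card_filter (N := {c, e}) (by simp [hNd])] at h
  by_cases h1 : f s(c, e) = f s(c, d) <;> by_cases h2 : f s(d, e) = f s(c, d) <;>
    simp_all [Finset.filter_insert, Finset.filter_singleton, Sym2.eq_swap (a := d) (b := c)]

/-- `d` has degree 1 in the class of `de`, so `e` needs a second edge of that class. -/
theorem IsLIEC.color_eq_of_neighborSet (hf : K.IsLIEC f) (hNd : K.neighborSet d = {c, e})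
    (hNe : K.neighborSet e = {c, d, g}) (hcd : f s(c, d) ≠ f s(d, e))
    (hce : f s(c, e) ≠ f s(d, e)) : f s(e, g) = f s(d, e) := by
  classical
  have hde : K.Adj d e := show e ∈ K.neighborSet d by simp [hNd]
  have h := isLIEC_iff.mp hf hde
  rw [colorDeg_eq_card_filter (N := {c, e}) (by simp [hNd]),
    colorDeg_eq_card_filter (N := {c, d, g}) (by simp [hNe])] at h
  by_contra h3
  simp_all [Finset.filter_insert, Finset.filter_singleton, Sym2.eq_swap (a := d) (b := c),
    Sym2.eq_swap (a := e) (b := c), Sym2.eq_swap (a := e) (b := d)]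

end triangle

section minimal

variable [Fintype V] {G : SimpleGraph V}

theorem exists_isLIEC_isolate (hmin : HasLIECBelow 3 G.edgeSet.ncard) (hclaw : ClawFree G)
    (hdeg : MaxDegreeLE G 3) {S : Set V} {u v : V} (hdec : Decomposable (G.isolate S))
    (huv : G.Adj u v) (hu : u ∈ S) : ∃ f : Sym2 V → Fin 3, (G.isolate S).IsLIEC f :=
  hmin.hasLIEC hdec hclaw.isolate hdeg.isolate (ncard_edgeSet_isolate_lt huv hu)

/-- No edge leaves `S`, so `f₀` on the edges at `S` combines with a coloring of the rest given by
minimality. -/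
theorem hasLIEC_of_neighborSet_subset (hmin : HasLIECBelow 3 G.edgeSet.ncard)
    (hdec : Decomposable G) (hclaw : ClawFree G) (hdeg : MaxDegreeLE G 3) {S : Set V}
    (hS : ∀ v ∈ S, G.neighborSet v ⊆ S) {u v : V} (huv : G.Adj u v) (hu : u ∈ S)
    (f₀ : Sym2 V → Fin 3)
    (hf₀ : ∀ u ∈ S, ∀ w ∈ G.neighborSet u,
      G.colorDeg f₀ (f₀ s(u, w)) u ≠ G.colorDeg f₀ (f₀ s(u, w)) w) :
    HasLIEC G 3 := by
  classical
  have hadj := isolate_adj_iff_of_notMem subset_rfl hS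
  obtain ⟨k, co, hco⟩ := hdec
  obtain ⟨co', hco'⟩ := exists_isLIEC_isolate hmin hclaw hdeg (S := S)
    ⟨k, co, IsLIEC.of_agree_off hco S hadj (fun _ _ _ _ => rfl) fun _ hu _ hw => (hw.2.1 hu).elim⟩
    huv hu
  let f : Sym2 V → Fin 3 := fun p => if ∃ x ∈ S, x ∈ p then f₀ p else co' p
  have hf : ∀ x ∈ S, ∀ w, f s(x, w) = f₀ s(x, w) := fun x hx w =>
    if_pos ⟨x, hx, Sym2.mem_mk_left x w⟩
  have hfS : ∀ x ∈ S, ∀ i, G.colorDeg f i x = G.colorDeg f₀ i x := fun x hx i =>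
    colorDeg_congr fun w => by rw [hf x hx w]
  refine ⟨f, IsLIEC.of_agree_off hco' S (fun u hu w => (hadj u hu w).symm) ?_ ?_⟩
  · rintro u hu w ⟨-, -, hw⟩
    refine if_neg ?_
    rintro ⟨x, hx, hxp⟩
    rcases Sym2.mem_iff.mp hxp with rfl | rfl
    exacts [hu hx, hw hx]
  · intro u hu w hw
    rw [hf u hu, hfS u hu, hfS w (hS u hu hw)]
    exact hf₀ u hu w hw

theorem hasLIEC_of_square (hmin : HasLIECBelow 3 G.edgeSet.ncard) (hdec : Decomposable G)
    (hclaw : ClawFree G) (hdeg : MaxDegreeLE G 3) {a b c d : V}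
    (hNa : G.neighborSet a = {b, d}) (hNb : G.neighborSet b = {a, c})
    (hNc : G.neighborSet c = {b, d}) (hNd : G.neighborSet d = {a, c}) (hac : a ≠ c)
    (hbd : b ≠ d) : HasLIEC G 3 := by
  classical
  obtain ⟨hab, had⟩ := ne_of_neighborSet_eq_pair hNa
  let f : Sym2 V → Fin 3 := fun p => if a ∈ p then 0 else 1
  refine hasLIEC_of_neighborSet_subset hmin hdec hclaw hdeg (S := {a, b, c, d})
    (by simp [hNa, hNb, hNc, hNd, Set.insert_subset_iff])
    (show G.Adj a b by simp [← mem_neighborSet, hNa]) (by simp) f ?_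
  have hA := colorDeg_eq_card_filter (G := G) (v := a) (f := f) (N := {b, d}) (by simp [hNa])
  have hB := colorDeg_eq_card_filter (G := G) (v := b) (f := f) (N := {a, c}) (by simp [hNb])
  have hC := colorDeg_eq_card_filter (G := G) (v := c) (f := f) (N := {b, d}) (by simp [hNc])
  have hD := colorDeg_eq_card_filter (G := G) (v := d) (f := f) (N := {a, c}) (by simp [hNd])
  simp only [Set.forall_mem_insert, Set.mem_singleton_iff, forall_eq, hNa, hNb, hNc, hNd]
  simp [hA, hB, hC, hD, f, Finset.filter_insert, Finset.filter_singleton, Sym2.mem_iff, hab,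
    had, hac, hbd]

end minimal

/-- The house: a 4-cycle `a b c d` with `a`, `b` of degree 2, and a roof `c d e` with apex `e`. -/
structure IsHouse (G : SimpleGraph V) (a b c d e : V) : Prop where
  nbr_a : G.neighborSet a = {b, d}
  nbr_b : G.neighborSet b = {a, c}
  nbr_c : G.neighborSet c = {b, d, e}
  nbr_d : G.neighborSet d = {a, c, e}
  ne_ac : a ≠ c
  ne_bd : b ≠ d
  ne_ae : a ≠ e
  ne_be : b ≠ e

theorem exists_isHouse [Finite V] {G : SimpleGraph V} (hclaw : ClawFree G)
    (hdeg : MaxDegreeLE G 3) {a b c d : V} (hNa : G.neighborSet a = {b, d})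
    (hNb : G.neighborSet b = {a, c}) (hcd : G.Adj c d) (hac : a ≠ c) (hbd : b ≠ d)
    (hd : (G.neighborSet d).ncard = 3) : ∃ e, G.IsHouse a b c d e := by
  have hda : G.Adj d a := G.adj_symm (show d ∈ G.neighborSet a by simp [hNa])
  have hbc : G.Adj b c := show c ∈ G.neighborSet b by simp [hNb]
  obtain ⟨e, hea, hec, hNd⟩ := Set.exists_eq_triple_of_ncard_eq_three hd hda hcd.symm hac
  have hde : G.Adj d e := show e ∈ G.neighborSet d by simp [hNd]
  have heb : e ≠ b := by
    rintro rfl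
    have : d ∈ G.neighborSet e := hde.symm
    simp only [hNb, Set.mem_insert_iff, Set.mem_singleton_iff] at this
    exact this.elim hda.ne hcd.ne'
  have hnac : ¬G.Adj a c := fun h => by
    simp [← mem_neighborSet, hNa, hcd.ne, hbc.ne'] at h
  have hnae : ¬G.Adj a e := fun h => by
    simp [← mem_neighborSet, hNa, heb, hde.ne'] at h
  have hce : G.Adj c e := by
    by_contra hnce
    exact hclaw ⟨d, a, c, e, hac, hea.symm, hec.symm, hda, hcd.symm, hde, hnac, hnae, hnce⟩
  have hsub : ({b, d, e} : Set V) ⊆ G.neighborSet c := by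
    simp [Set.insert_subset_iff, hcd, hce, hbc.symm]
  have hNc : G.neighborSet c = {b, d, e} :=
    (Set.eq_of_subset_of_ncard_le hsub ((hdeg c).trans_eq (Set.ncard_eq_three.mpr
      ⟨b, d, e, hbd, heb.symm, hde.ne, rfl⟩).symm) (Set.toFinite _)).symm
  exact ⟨e, hNa, hNb, hNc, hNd, hac, hbd, hea.symm, heb.symm⟩

namespace IsHouse

variable {G : SimpleGraph V} {a b c d e g : V}

theorem symm (hH : G.IsHouse a b c d e) : G.IsHouse b a d c e :=
  ⟨hH.nbr_b, hH.nbr_a, hH.nbr_d, hH.nbr_c, hH.ne_bd, hH.ne_ac, hH.ne_be, hH.ne_ae⟩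

theorem distinct (hH : G.IsHouse a b c d e) :
    a ≠ b ∧ a ≠ c ∧ a ≠ d ∧ a ≠ e ∧ b ≠ c ∧ b ≠ d ∧ b ≠ e ∧ c ≠ d ∧ c ≠ e ∧ d ≠ e :=
  ⟨G.ne_of_adj (by simp [← mem_neighborSet, hH.nbr_a]), hH.ne_ac,
    G.ne_of_adj (by simp [← mem_neighborSet, hH.nbr_a]), hH.ne_ae,
    G.ne_of_adj (by simp [← mem_neighborSet, hH.nbr_b]), hH.ne_bd, hH.ne_be,
    G.ne_of_adj (by simp [← mem_neighborSet, hH.nbr_c]),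
    G.ne_of_adj (by simp [← mem_neighborSet, hH.nbr_c]),
    G.ne_of_adj (by simp [← mem_neighborSet, hH.nbr_d])⟩

theorem ne_of_adj_apex (hH : G.IsHouse a b c d e) (heg : G.Adj e g) : g ≠ a ∧ g ≠ b := by
  obtain ⟨-, -, -, hae, -, -, hbe, -, hce, hde⟩ := hH.distinct
  constructor <;> rintro rfl
  · have : e ∈ G.neighborSet g := heg.symm
    simp only [hH.nbr_a, Set.mem_insert_iff, Set.mem_singleton_iff] at this
    exact this.elim hbe.symm hde.symm
  · have : e ∈ G.neighborSet g := heg.symm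
    simp only [hH.nbr_b, Set.mem_insert_iff, Set.mem_singleton_iff] at this
    exact this.elim hae.symm hce.symm

theorem neighborSet_subset (hH : G.IsHouse a b c d e) :
    ∀ v ∈ ({a, b, c, d} : Set V), G.neighborSet v ⊆ {a, b, c, d, e} := by
  simp [hH.nbr_a, hH.nbr_b, hH.nbr_c, hH.nbr_d, Set.insert_subset_iff]

theorem neighborSet_isolate_pair (hH : G.IsHouse a b c d e)
    (hNe : G.neighborSet e = {c, d, g}) (hga : g ≠ a) (hgb : g ≠ b) :
    (G.isolate {a, b}).neighborSet c = {d, e} ∧ (G.isolate {a, b}).neighborSet d = {c, e} ∧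
      (G.isolate {a, b}).neighborSet e = {c, d, g} := by
  obtain ⟨hab, hac, had, hae, hbc, hbd, hbe, hcd, hce, hde⟩ := hH.distinct
  refine ⟨?_, ?_, ?_⟩ <;> rw [neighborSet_isolate (by simp [*, Ne.symm])] <;> ext w <;>
    simp [hH.nbr_c, hH.nbr_d, hNe] <;> aesop

theorem neighborSet_isolate_square (hH : G.IsHouse a b c d e)
    (hNe : G.neighborSet e = {c, d, g}) (hgc : g ≠ c) (hgd : g ≠ d) :
    (G.isolate {a, b, c, d}).neighborSet e = {g} := by
  obtain ⟨-, -, -, hae, -, -, hbe, -, hce, hde⟩ := hH.distinct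
  obtain ⟨hga, hgb⟩ := hH.ne_of_adj_apex (show g ∈ G.neighborSet e by simp [hNe])
  rw [neighborSet_isolate (by simp [hae.symm, hbe.symm, hce.symm, hde.symm]), hNe]
  ext w
  simp only [Set.mem_sdiff, Set.mem_insert_iff, Set.mem_singleton_iff]
  constructor
  · tauto
  · rintro rfl
    tauto

theorem colorDeg_eq [DecidableEq V] [DecidableEq α] (hH : G.IsHouse a b c d e)
    (f : Sym2 V → α) :
    (∀ i, G.colorDeg f i a = (({b, d} : Finset V).filter fun w => f s(a, w) = i).card) ∧
    (∀ i, G.colorDeg f i b = (({a, c} : Finset V).filter fun w => f s(b, w) = i).card) ∧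
    (∀ i, G.colorDeg f i c = (({b, d, e} : Finset V).filter fun w => f s(c, w) = i).card) ∧
    (∀ i, G.colorDeg f i d = (({a, c, e} : Finset V).filter fun w => f s(d, w) = i).card) :=
  ⟨colorDeg_eq_card_filter (by simp [hH.nbr_a]), colorDeg_eq_card_filter (by simp [hH.nbr_b]),
    colorDeg_eq_card_filter (by simp [hH.nbr_c]), colorDeg_eq_card_filter (by simp [hH.nbr_d])⟩

/-- In the class of `eg`, which now also contains `de`, `e` has degree 2 and `g` keeps degree 1. -/
theorem decomposable_isolate_pair (hH : G.IsHouse a b c d e)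
    (hNe : G.neighborSet e = {c, d, g}) (hgc : g ≠ c) (hgd : g ≠ d) {k : ℕ}
    {co : Sym2 V → Fin k} (hco : G.IsLIEC co) (hg : G.colorDeg co (co s(e, g)) g = 1) :
    Decomposable (G.isolate {a, b}) := by
  classical
  obtain ⟨hab, hac, had, -, hbc, hbd, -, hcd, hce, hde⟩ := hH.distinct
  have heg : G.Adj e g := show g ∈ G.neighborSet e by simp [hNe]
  obtain ⟨hga, hgb⟩ := hH.ne_of_adj_apex heg
  obtain ⟨hNc', hNd', hNe'⟩ := hH.neighborSet_isolate_pair hNe hga hgb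
  let t := co s(e, g)
  let f : Sym2 V → Fin (k + 1) := fun p =>
    if c ∈ p then Fin.last k else if d ∈ p then t.castSucc else (co p).castSucc
  let L : Set V := {a, b, c, d, e}
  have hL : ∀ v ∈ ({a, b, c, d} : Set V), G.neighborSet v ⊆ L := hH.neighborSet_subset
  have hadj : ∀ u ∉ L, ∀ w, (G.isolate {a, b}).Adj u w ↔ G.Adj u w :=
    isolate_adj_iff_of_notMem (by simp [L, Set.insert_subset_iff])
      (fun v hv => hL v (by rcases hv with rfl | rfl <;> simp))
  have hcol : ∀ u ∉ L, ∀ w, G.Adj u w → f s(u, w) = (Fin.castSucc ∘ co) s(u, w) := by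
    intro u hu w huw
    have hw := fun h => hu (hL w h huw.symm)
    simp_all [f, L, eq_comm]
  have hgL : g ∉ L := by simp [L, hga, hgb, hgc, hgd, heg.ne.symm]
  have hDg := colorDeg_eq_of_agree (hadj g hgL) (hcol g hgL) t.castSucc
  rw [colorDeg_comp (Fin.castSucc_injective k)] at hDg
  refine ⟨k + 1, f, IsLIEC.of_agree_off (hco.comp (Fin.castSucc_injective k)) L hadj hcol ?_⟩
  have hC := colorDeg_eq_card_filter (G := G.isolate {a, b}) (v := c) (f := f) (N := {d, e})
    (by simp [hNc'])
  have hD := colorDeg_eq_card_filter (G := G.isolate {a, b}) (v := d) (f := f) (N := {c, e})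
    (by simp [hNd'])
  have hE := colorDeg_eq_card_filter (G := G.isolate {a, b}) (v := e) (f := f) (N := {c, d, g})
    (by simp [hNe'])
  have hlast : ∀ i : Fin k, Fin.last k ≠ i.castSucc := fun i => (Fin.castSucc_ne_last i).symm
  simp only [L, Set.forall_mem_insert, Set.mem_singleton_iff, forall_eq, hNc', hNd', hNe']
  simp [hC, hD, hE, hDg, hg, f, t, Finset.filter_insert, Finset.filter_singleton, Sym2.mem_iff,
    hlast, Fin.castSucc_ne_last, hab, hcd, hce, hde, hab.symm, had.symm, hbc.symm, hcd.symm,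
    hac.symm, hbd.symm, hgd.symm, hgc.symm]

/-- In the class of `cd`, `c` gets degree 3 while `b`, `d`, `e` have degree 1. -/
theorem hasLIEC_of_isLIEC_isolate_pair (hH : G.IsHouse a b c d e)
    (hNe : G.neighborSet e = {c, d, g}) (hgd : g ≠ d) {co : Sym2 V → Fin 3}
    (hco : (G.isolate {a, b}).IsLIEC co) (hx : co s(c, e) = co s(c, d)) : HasLIEC G 3 := by
  classical
  obtain ⟨hab, hac, had, hae, hbc, hbd, hbe, -, -, hde⟩ := hH.distinct
  obtain ⟨hga, hgb⟩ := hH.ne_of_adj_apex (show g ∈ G.neighborSet e by simp [hNe])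
  obtain ⟨hNc', hNd', hNe'⟩ := hH.neighborSet_isolate_pair hNe hga hgb
  have hy := (hco.color_eq_iff_ne hNc' hNd').mp hx
  have heg := hco.color_eq_of_neighborSet hNd' hNe' (Ne.symm hy) (hx ▸ Ne.symm hy)
  obtain ⟨z, hzx, hzy⟩ := Fin.exists_ne_ne_three (co s(c, d)) (co s(d, e))
  let f : Sym2 V → Fin 3 := fun p => if a ∈ p then z else if b ∈ p then co s(c, d) else co p
  refine ⟨f, IsLIEC.of_agree_off hco {a, b, c, d}
    (fun u hu w => (isolate_adj_iff_of_notMem (by simp [Set.insert_subset_iff])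
      (by simp [hH.nbr_a, hH.nbr_b, Set.insert_subset_iff]) u hu w).symm) ?_ ?_⟩
  · rintro u - w ⟨-, hu, hw⟩
    simp_all [f, eq_comm]
  · obtain ⟨hA, hB, hC, hD⟩ := hH.colorDeg_eq f
    have hE := colorDeg_eq_card_filter (G := G) (v := e) (f := f) (N := {c, d, g}) (by simp [hNe])
    simp only [Set.forall_mem_insert, Set.mem_singleton_iff, forall_eq, hH.nbr_a, hH.nbr_b,
      hH.nbr_c, hH.nbr_d]
    simp [hA, hB, hC, hD, hE, f, Finset.filter_insert, Finset.filter_singleton, Sym2.mem_iff,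
      Sym2.eq_swap (a := d) (b := c), Sym2.eq_swap (a := e) (b := c),
      Sym2.eq_swap (a := e) (b := d), hx, heg, hy, hy.symm, hzx, hzy, hzx.symm, hzy.symm, hab,
      had, hbc, hde, hac, hbd, hae, hbe, hab.symm, hga.symm, hgb.symm, hgd.symm]

/-- `e` becomes a leaf of the class of `eg`, whose other end `g` does not have degree 1 there. -/
theorem decomposable_isolate_square (hH : G.IsHouse a b c d e)
    (hNe : G.neighborSet e = {c, d, g}) (hgc : g ≠ c) (hgd : g ≠ d) {k : ℕ}
    {co : Sym2 V → Fin k} (hco : G.IsLIEC co) (hg : G.colorDeg co (co s(e, g)) g ≠ 1) :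
    Decomposable (G.isolate {a, b, c, d}) := by
  classical
  have heg : G.Adj e g := show g ∈ G.neighborSet e by simp [hNe]
  obtain ⟨hga, hgb⟩ := hH.ne_of_adj_apex heg
  have hNe' := hH.neighborSet_isolate_square hNe hgc hgd
  have hadj := isolate_adj_iff_of_notMem (by simp [Set.insert_subset_iff]) hH.neighborSet_subset
  have hgL : g ∉ ({a, b, c, d, e} : Set V) := by simp [hga, hgb, hgc, hgd, heg.ne.symm]
  have hDg := colorDeg_eq_of_agree (hadj g hgL) (f₁ := co) (fun _ _ => rfl) (co s(e, g))
  have hE := colorDeg_eq_card_filter (G := G.isolate {a, b, c, d}) (v := e) (f := co) (N := {g})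
    (by simp [hNe'])
  refine ⟨k, co, IsLIEC.of_agree_off hco _ hadj (fun _ _ _ _ => rfl) ?_⟩
  simp only [Set.forall_mem_insert, Set.mem_singleton_iff, forall_eq, hNe']
  simp [hDg, hE, Finset.filter_singleton, Ne.symm hg]

/-- The new edges form paths of length 2 centered at `b`, `d`, `e`, the one at `b` in the color
`t` of `eg`; `e` keeps degree 1 in class `t`, where `g` does not have degree 1. -/
theorem hasLIEC_of_isLIEC_isolate_square (hH : G.IsHouse a b c d e)
    (hNe : G.neighborSet e = {c, d, g}) (hgc : g ≠ c) (hgd : g ≠ d) {co : Sym2 V → Fin 3}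
    (hco : (G.isolate {a, b, c, d}).IsLIEC co) : HasLIEC G 3 := by
  classical
  obtain ⟨hab, hac, had, hae, hbc, hbd, hbe, hcd, hce, hde⟩ := hH.distinct
  have heg : G.Adj e g := show g ∈ G.neighborSet e by simp [hNe]
  obtain ⟨hga, hgb⟩ := hH.ne_of_adj_apex heg
  have hNe' := hH.neighborSet_isolate_square hNe hgc hgd
  obtain ⟨t, ht⟩ : ∃ t, co s(e, g) = t := ⟨_, rfl⟩
  have hgt : (G.isolate {a, b, c, d}).colorDeg co t g ≠ 1 := by
    have h := isLIEC_iff.mp hco (show g ∈ (G.isolate {a, b, c, d}).neighborSet e by simp [hNe'])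
    rwa [colorDeg_eq_card_filter (N := {g}) (by simp [hNe']), Finset.filter_singleton,
      if_pos rfl, Finset.card_singleton, ne_comm, ht] at h
  obtain ⟨r, hrt, -⟩ := Fin.exists_ne_ne_three t t
  obtain ⟨s, hst, hsr⟩ := Fin.exists_ne_ne_three t r
  let f : Sym2 V → Fin 3 := fun p =>
    if b ∈ p then t else if e ∈ p ∧ (c ∈ p ∨ d ∈ p) then s else if d ∈ p then r else co p
  have hadj := isolate_adj_iff_of_notMem (by simp [Set.insert_subset_iff]) hH.neighborSet_subset
  have hcol : ∀ u ∉ ({a, b, c, d, e} : Set V), ∀ w, (G.isolate {a, b, c, d}).Adj u w →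
      f s(u, w) = co s(u, w) := by
    rintro u hu w ⟨-, -, hw⟩
    simp_all [f, eq_comm]
  have hgL : g ∉ ({a, b, c, d, e} : Set V) := by simp [hga, hgb, hgc, hgd, heg.ne.symm]
  have hDg := colorDeg_eq_of_agree (fun w => (hadj g hgL w).symm) (hcol g hgL) t
  refine ⟨f, IsLIEC.of_agree_off hco _ (fun u hu w => (hadj u hu w).symm) hcol ?_⟩
  obtain ⟨hA, hB, hC, hD⟩ := hH.colorDeg_eq f
  have hE := colorDeg_eq_card_filter (G := G) (v := e) (f := f) (N := {c, d, g}) (by simp [hNe])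
  simp only [Set.forall_mem_insert, Set.mem_singleton_iff, forall_eq, hH.nbr_a, hH.nbr_b,
    hH.nbr_c, hH.nbr_d, hNe]
  simp [hA, hB, hC, hD, hE, hDg, f, Finset.filter_insert, Finset.filter_singleton, Sym2.mem_iff,
    ht, Ne.symm hgt, hrt, hst, hsr, hrt.symm, hst.symm, hsr.symm, hbc, hcd, hce, hde, hac, hbd,
    hbe, hab.symm, had.symm, hbc.symm, hcd.symm, hce.symm, hde.symm, hac.symm, hbd.symm, hae.symm,
    hbe.symm, hgb.symm, hgd.symm, hgc.symm]

variable [Fintype V]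

theorem hasLIEC_of_neighborSet_eq_pair (hH : G.IsHouse a b c d e)
    (hNe : G.neighborSet e = {c, d}) (hmin : HasLIECBelow 3 G.edgeSet.ncard)
    (hdec : Decomposable G) (hclaw : ClawFree G) (hdeg : MaxDegreeLE G 3) : HasLIEC G 3 := by
  classical
  obtain ⟨hab, hac, had, hae, -, hbd, hbe, hcd, hce, hde⟩ := hH.distinct
  let f : Sym2 V → Fin 3 := fun p => if a ∈ p then 0 else if e ∈ p then 2 else 1
  refine hasLIEC_of_neighborSet_subset hmin hdec hclaw hdeg (S := {a, b, c, d, e})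
    (by simp [hH.nbr_a, hH.nbr_b, hH.nbr_c, hH.nbr_d, hNe, Set.insert_subset_iff])
    (show G.Adj a b by simp [← mem_neighborSet, hH.nbr_a]) (by simp) f ?_
  obtain ⟨hA, hB, hC, hD⟩ := hH.colorDeg_eq f
  have hE := colorDeg_eq_card_filter (G := G) (v := e) (f := f) (N := {c, d}) (by simp [hNe])
  simp only [Set.forall_mem_insert, Set.mem_singleton_iff, forall_eq, hH.nbr_a, hH.nbr_b,
    hH.nbr_c, hH.nbr_d, hNe]
  simp [hA, hB, hC, hD, hE, f, Finset.filter_insert, Finset.filter_singleton, Sym2.mem_iff, hab,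
    had, hcd, hac, hbd, hae, hce.symm, hde.symm, hae.symm, hbe.symm]

/-- Split on the degree of `g` in the class of `eg` and, in the first case, on which of `ce`,
`de` shares the color of `cd`; the latter case is the mirror image of the former. -/
theorem hasLIEC_of_neighborSet_eq_triple (hH : G.IsHouse a b c d e)
    (hNe : G.neighborSet e = {c, d, g}) (hgc : g ≠ c) (hgd : g ≠ d)
    (hmin : HasLIECBelow 3 G.edgeSet.ncard) (hdec : Decomposable G) (hclaw : ClawFree G)
    (hdeg : MaxDegreeLE G 3) : HasLIEC G 3 := by
  classical
  obtain ⟨k, co, hco⟩ := hdec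
  have hab : G.Adj a b := show b ∈ G.neighborSet a by simp [hH.nbr_a]
  by_cases hg : G.colorDeg co (co s(e, g)) g = 1
  · obtain ⟨co', hco'⟩ := exists_isLIEC_isolate hmin hclaw hdeg
      (hH.decomposable_isolate_pair hNe hgc hgd hco hg) hab (by simp)
    by_cases hx : co' s(c, e) = co' s(c, d)
    · exact hH.hasLIEC_of_isLIEC_isolate_pair hNe hgd hco' hx
    obtain ⟨hga, hgb⟩ := hH.ne_of_adj_apex (show g ∈ G.neighborSet e by simp [hNe])
    obtain ⟨hNc', hNd', -⟩ := hH.neighborSet_isolate_pair hNe hga hgb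
    have hy : co' s(d, e) = co' s(d, c) := by
      rw [Sym2.eq_swap (a := d) (b := c)]
      exact not_not.mp ((hco'.color_eq_iff_ne hNc' hNd').not.mp hx)
    rw [Set.pair_comm] at hco'
    exact hH.symm.hasLIEC_of_isLIEC_isolate_pair (by rw [Set.insert_comm]; exact hNe) hgc hco' hy
  · obtain ⟨co', hco'⟩ := exists_isLIEC_isolate hmin hclaw hdeg
      (hH.decomposable_isolate_square hNe hgc hgd hco hg) hab (by simp)
    exact hH.hasLIEC_of_isLIEC_isolate_square hNe hgc hgd hco'

end IsHouse

end SimpleGraph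

open SimpleGraph in
theorem minimal_cex_no_C4_two_consecutive_deg2_general {V : Type*} [Fintype V] (G : SimpleGraph V)
    (hdec : Decomposable G) (hclaw : ClawFree G)
    (hdeg : MaxDegreeLE G 3) (hG : ¬ HasLIEC G 3)
    (hmin : ∀ (W : Type) [Fintype W] (H : SimpleGraph W),
      Decomposable H → ClawFree H → MaxDegreeLE H 3 →
      H.edgeSet.ncard < G.edgeSet.ncard → HasLIEC H 3) :
    ¬ ∃ a b c d : V, a ≠ c ∧ b ≠ d ∧ G.Adj a b ∧ G.Adj b c ∧ G.Adj c d ∧ G.Adj d a ∧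
      (G.neighborSet a).ncard = 2 ∧ (G.neighborSet b).ncard = 2 := by
  rintro ⟨a, b, c, d, hac, hbd, hab, hbc, hcd, hda, ha2, hb2⟩
  have hNa := Set.eq_pair_of_ncard_eq_two ha2 hab hda.symm hbd
  have hNb := Set.eq_pair_of_ncard_eq_two hb2 hab.symm hbc hac
  obtain ⟨e, hH⟩ : ∃ e, G.IsHouse a b c d e := by
    by_cases hd3 : (G.neighborSet d).ncard = 3
    · exact exists_isHouse hclaw hdeg hNa hNb hcd hac hbd hd3
    by_cases hc3 : (G.neighborSet c).ncard = 3
    · obtain ⟨e, hH⟩ := exists_isHouse hclaw hdeg hNb hNa hcd.symm hbd hac hc3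
      exact ⟨e, hH.symm⟩
    have hc2 : 1 < (G.neighborSet c).ncard :=
      (Set.one_lt_ncard (Set.toFinite _)).mpr ⟨b, hbc.symm, d, hcd, hbd⟩
    have hd2 : 1 < (G.neighborSet d).ncard :=
      (Set.one_lt_ncard (Set.toFinite _)).mpr ⟨a, hda, c, hcd.symm, hac⟩
    refine (hG (hasLIEC_of_square hmin hdec hclaw hdeg hNa hNb ?_ ?_ hac hbd)).elim
    · exact Set.eq_pair_of_ncard_eq_two (by have := hdeg c; omega) hbc.symm hcd hbd
    · exact Set.eq_pair_of_ncard_eq_two (by have := hdeg d; omega) hda hcd.symm hac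
  have hce : G.Adj e c := G.adj_symm (show e ∈ G.neighborSet c by simp [hH.nbr_c])
  have hde : G.Adj e d := G.adj_symm (show e ∈ G.neighborSet d by simp [hH.nbr_d])
  by_cases he3 : (G.neighborSet e).ncard = 3
  · obtain ⟨g, hgc, hgd, hNe⟩ := Set.exists_eq_triple_of_ncard_eq_three he3 hce hde hcd.ne
    exact hG (hH.hasLIEC_of_neighborSet_eq_triple hNe hgc hgd hmin hdec hclaw hdeg)
  have he2 : 1 < (G.neighborSet e).ncard :=
    (Set.one_lt_ncard (Set.toFinite _)).mpr ⟨c, hce, d, hde, hcd.ne⟩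
  exact hG (hH.hasLIEC_of_neighborSet_eq_pair
    (Set.eq_pair_of_ncard_eq_two (by have := hdeg e; omega) hce hde hcd.ne) hmin hdec hclaw hdeg)

/-- In a minimal counterexample to the 3-color theorem for claw-free subcubic graphs, there is no 4-cycle incident with two consecutive vertices of degree 2. -/
theorem minimal_cex_no_C4_two_consecutive_deg2 {V : Type*} [Fintype V] (G : SimpleGraph V)
    (hconn : G.Connected) (hdec : Decomposable G) (hclaw : ClawFree G)
    (hdeg : MaxDegreeLE G 3) (hG : ¬ HasLIEC G 3)
    (hmin : ∀ (W : Type) [Fintype W] (H : SimpleGraph W),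
      Decomposable H → ClawFree H → MaxDegreeLE H 3 →
      H.edgeSet.ncard < G.edgeSet.ncard → HasLIEC H 3) :
    ¬ ∃ a b c d : V, a ≠ c ∧ b ≠ d ∧ G.Adj a b ∧ G.Adj b c ∧ G.Adj c d ∧ G.Adj d a ∧
      (G.neighborSet a).ncard = 2 ∧ (G.neighborSet b).ncard = 2 :=
  minimal_cex_no_C4_two_consecutive_deg2_general G hdec hclaw hdeg hG hmin
end
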